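/- Let (H,R) be a quasitriangular crossed Hopf π-coalgebra with Drinfeld elements u_α. Then for all α ∈ π and h ∈ H_α: s_{α⁻¹}(u_{α⁻¹}) h = (s_α⁻¹ ∘ s_{α⁻¹}⁻¹ ∘ φ_α)(h) s_{α⁻¹}(u_{α⁻¹}) (assuming the antipode is bijective). -/

import Mathlib

/- Crossed Hopf π-coalgebras (Turaev coalgebras). -/

open TensorProduct

universe u

variable (k : Type u) [Field k] (π : Type u) [Group π]

/-- Cast along an equality of indices, as a `k`-linear map. -/
def lcast (A : π → Type u) [∀ α, Ring (A α)] [∀ α, Algebra k (A α)]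
    {α β : π} (h : α = β) : A α →ₗ[k] A β where
  toFun x := cast (congrArg A h) x
  map_add' := by subst h; intro x y; rfl
  map_smul' := by subst h; intro c x; rfl

/-- A crossed Hopf `π`-coalgebra (Turaev coalgebra) structure on a family of
`k`-algebras `A α`. -/
structure TCoalgStruct (A : π → Type u) [∀ α, Ring (A α)] [∀ α, Algebra k (A α)] where
  /-- comultiplication -/
  Δ : ∀ α β : π, A (α * β) →ₐ[k] (A α ⊗[k] A β)
  /-- counit -/
  ε : A 1 →ₐ[k] k
  /-- antipode -/
  s : ∀ α : π, A α →ₗ[k] A α⁻¹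
  /-- conjugation -/
  φ : ∀ β α : π, A α →ₐ[k] A (β * α * β⁻¹)
  φ_bij : ∀ β α : π, Function.Bijective (φ β α)
  coassoc : ∀ (α β γ : π) (h : A (α * β * γ)),
    (TensorProduct.assoc k (A α) (A β) (A γ))
        (TensorProduct.map (Δ α β).toLinearMap LinearMap.id (Δ (α * β) γ h)) =
      TensorProduct.map LinearMap.id (Δ β γ).toLinearMap
        (Δ α (β * γ) (cast (congrArg A (mul_assoc α β γ)) h))
  counit_left : ∀ (α : π) (h : A (1 * α)),
    TensorProduct.lid k (A α)
        (TensorProduct.map (ε).toLinearMap LinearMap.id (Δ 1 α h)) =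
      cast (congrArg A (one_mul α)) h
  counit_right : ∀ (α : π) (h : A (α * 1)),
    TensorProduct.rid k (A α)
        (TensorProduct.map LinearMap.id (ε).toLinearMap (Δ α 1 h)) =
      cast (congrArg A (mul_one α)) h
  antipode_right : ∀ (α : π) (h : A (α * α⁻¹)),
    LinearMap.mul' k (A α)
        (TensorProduct.map LinearMap.id
          ((lcast k π A (inv_inv α)).comp (s α⁻¹)) (Δ α α⁻¹ h)) =
      algebraMap k (A α) (ε (cast (congrArg A (by group : α * α⁻¹ = 1)) h))
  antipode_left : ∀ (α : π) (h : A (α⁻¹ * α)),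
    LinearMap.mul' k (A α)
        (TensorProduct.map ((lcast k π A (inv_inv α)).comp (s α⁻¹)) LinearMap.id
          (Δ α⁻¹ α h)) =
      algebraMap k (A α) (ε (cast (congrArg A (by group : α⁻¹ * α = 1)) h))
  φ_mul : ∀ (β γ α : π) (h : A α),
    cast (congrArg A (by group : β * (γ * α * γ⁻¹) * β⁻¹ = β * γ * α * (β * γ)⁻¹))
        (φ β (γ * α * γ⁻¹) (φ γ α h)) = φ (β * γ) α h
  φ_comul : ∀ (γ α β : π) (h : A (α * β)),
    TensorProduct.map (φ γ α).toLinearMap (φ γ β).toLinearMap (Δ α β h) =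
      Δ (γ * α * γ⁻¹) (γ * β * γ⁻¹)
        (cast (congrArg A (by group : γ * (α * β) * γ⁻¹ = γ * α * γ⁻¹ * (γ * β * γ⁻¹)))
          (φ γ (α * β) h))
  φ_counit : ∀ (γ : π) (h : A 1),
    ε (cast (congrArg A (by group : γ * 1 * γ⁻¹ = 1)) (φ γ 1 h)) = ε h

/-- A quasitriangular structure (universal R-matrix) on a crossed Hopf
`π`-coalgebra. -/
structure QTStruct (A : π → Type u) [∀ α, Ring (A α)] [∀ α, Algebra k (A α)]
    (T : TCoalgStruct k π A) where
  /-- the universal R-matrix -/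
  R : ∀ α β : π, A α ⊗[k] A β
  /-- its inverse -/
  Rinv : ∀ α β : π, A α ⊗[k] A β
  R_inv_left : ∀ α β : π, Rinv α β * R α β = 1
  R_inv_right : ∀ α β : π, R α β * Rinv α β = 1
  R_rel1 : ∀ (α β : π) (h : A (α * β)),
    R α β * T.Δ α β h =
      ((TensorProduct.comm k (A β) (A α))
        (TensorProduct.map
          ((lcast k π A (by group : α⁻¹ * (α * β * α⁻¹) * α⁻¹⁻¹ = β)).comp
            (T.φ α⁻¹ (α * β * α⁻¹)).toLinearMap) LinearMap.id
          (T.Δ (α * β * α⁻¹) α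
            (cast (congrArg A (by group : α * β = α * β * α⁻¹ * α)) h)))) * R α β
  R_rel2 : ∀ α β γ : π,
    TensorProduct.map LinearMap.id (T.Δ β γ).toLinearMap (R α (β * γ)) =
      (TensorProduct.map LinearMap.id ((TensorProduct.mk k (A β) (A γ)) 1) (R α γ)) *
      (TensorProduct.map LinearMap.id ((TensorProduct.mk k (A β) (A γ)).flip 1) (R α β))
  R_rel3 : ∀ α β γ : π,
    TensorProduct.map (T.Δ α β).toLinearMap LinearMap.id (R (α * β) γ) =
      (TensorProduct.map ((TensorProduct.mk k (A α) (A β)).flip 1) LinearMap.id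
        (TensorProduct.map
          ((lcast k π A (by group : β * (β⁻¹ * α * β) * β⁻¹ = α)).comp
            (T.φ β (β⁻¹ * α * β)).toLinearMap) LinearMap.id (R (β⁻¹ * α * β) γ))) *
      (TensorProduct.map ((TensorProduct.mk k (A α) (A β)) 1) LinearMap.id (R β γ))
  R_phi : ∀ α β γ : π,
    TensorProduct.map (T.φ α β).toLinearMap (T.φ α γ).toLinearMap (R β γ) =
      R (α * β * α⁻¹) (α * γ * α⁻¹)

/-- The `α`-th Drinfeld element `u_α = (s_{α⁻¹} ∘ φ_α)(ζ_{(α⁻¹).i}) · ξ_{(α).i}`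
of a quasitriangular crossed Hopf `π`-coalgebra. -/
noncomputable def drinfeld
    (A : π → Type u) [∀ α, Ring (A α)] [∀ α, Algebra k (A α)]
    (T : TCoalgStruct k π A) (Q : QTStruct k π A T) (α : π) : A α :=
  LinearMap.mul' k (A α)
    ((TensorProduct.comm k (A α) (A α))
      (TensorProduct.map LinearMap.id
        ((lcast k π A (inv_inv α)).comp ((T.s α⁻¹).comp
          ((lcast k π A (by group : α * α⁻¹ * α⁻¹ = α⁻¹)).comp
            (T.φ α α⁻¹).toLinearMap)))
        (Q.R α α⁻¹)))

section Infra
set_option linter.unusedSectionVars false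

variable {k : Type u} [Field k] {π : Type u} [Group π]
  {A : π → Type u} [∀ α, Ring (A α)] [∀ α, Algebra k (A α)]

namespace TC

theorem lcast_refl {α : π} (h : α = α) (x : A α) : lcast k π A h x = x := rfl

theorem lcast_lcast {α β γ : π} (h : α = β) (h' : β = γ) (x : A α) :
    lcast k π A h' (lcast k π A h x) = lcast k π A (h.trans h') x := by
  subst h; rfl

theorem lcast_mul {α β : π} (h : α = β) (x y : A α) :
    lcast k π A h (x * y) = lcast k π A h x * lcast k π A h y := by subst h; rfl

theorem lcast_one {α β : π} (h : α = β) : lcast k π A h (1 : A α) = 1 := by subst h; rfl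

theorem lcast_algebraMap {α β : π} (h : α = β) (r : k) :
    lcast k π A h (algebraMap k (A α) r) = algebraMap k (A β) r := by subst h; rfl

theorem lcast_inj {α β : π} (h : α = β) {x y : A α}
    (hxy : lcast k π A h x = lcast k π A h y) : x = y := by subst h; exact hxy

variable (T : TCoalgStruct k π A)

theorem s_lcast {α β : π} (h : α = β) (h₂ : α⁻¹ = β⁻¹) (x : A α) :
    T.s β (lcast k π A h x) = lcast k π A h₂ (T.s α x) := by subst h; rfl

theorem φ_lcast {α β : π} (γ : π) (h : α = β) (h₂ : γ * α * γ⁻¹ = γ * β * γ⁻¹) (x : A α) :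
    T.φ γ β (lcast k π A h x) = lcast k π A h₂ (T.φ γ α x) := by subst h; rfl

theorem φ_index {γ γ' α : π} (h : γ = γ') (h₂ : γ * α * γ⁻¹ = γ' * α * γ'⁻¹) (x : A α) :
    T.φ γ' α x = lcast k π A h₂ (T.φ γ α x) := by subst h; rfl

theorem Δ_lcast {α α' β β' : π} (h₁ : α = α') (h₂ : β = β') (h : α * β = α' * β')
    (x : A (α * β)) :
    T.Δ α' β' (lcast k π A h x) =
      TensorProduct.map (lcast k π A h₁) (lcast k π A h₂) (T.Δ α β x) := by
  subst h₁; subst h₂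
  have : lcast k π A h x = x := rfl
  rw [this]
  have : ∀ t : A α ⊗[k] A β,
      TensorProduct.map (lcast k π A rfl) (lcast k π A rfl) t = t := by
    intro t
    have h1 : (lcast k π A (rfl : α = α)) = LinearMap.id := rfl
    have h2 : (lcast k π A (rfl : β = β)) = LinearMap.id := rfl
    rw [h1, h2, TensorProduct.map_id]; rfl
  rw [this]

end TC
end Infra
section Infra2
set_option linter.unusedSectionVars false

variable {k : Type u} [Field k] {π : Type u} [Group π]
  {A : π → Type u} [∀ α, Ring (A α)] [∀ α, Algebra k (A α)]

namespace TC
variable (T : TCoalgStruct k π A)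

theorem antipode_right' (δ δ' : π) (hδ : δ' = δ⁻¹) (h2 : δ'⁻¹ = δ) (e1 : δ * δ' = 1)
    (w : A (δ * δ')) :
    LinearMap.mul' k (A δ)
        (TensorProduct.map LinearMap.id ((lcast k π A h2).comp (T.s δ')) (T.Δ δ δ' w)) =
      algebraMap k (A δ) (T.ε (lcast k π A e1 w)) := by
  subst hδ; exact T.antipode_right δ w

theorem antipode_left' (δ δ' : π) (hδ : δ = δ'⁻¹) (h2 : δ⁻¹ = δ') (e1 : δ * δ' = 1)
    (w : A (δ * δ')) :
    LinearMap.mul' k (A δ')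
        (TensorProduct.map ((lcast k π A h2).comp (T.s δ)) LinearMap.id (T.Δ δ δ' w)) =
      algebraMap k (A δ') (T.ε (lcast k π A e1 w)) := by
  subst hδ; exact T.antipode_left δ' w

theorem ar_sum (δ δ' : π) (hδ : δ' = δ⁻¹) (h2 : δ'⁻¹ = δ) (e1 : δ * δ' = 1)
    (w : A (δ * δ')) (S : Finset (A δ × A δ'))
    (hS : T.Δ δ δ' w = ∑ p ∈ S, p.1 ⊗ₜ[k] p.2) :
    ∑ p ∈ S, p.1 * lcast k π A h2 (T.s δ' p.2) =
      algebraMap k (A δ) (T.ε (lcast k π A e1 w)) := by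
  have h := antipode_right' T δ δ' hδ h2 e1 w
  rw [hS, map_sum, map_sum] at h
  simpa using h

theorem al_sum (δ δ' : π) (hδ : δ = δ'⁻¹) (h2 : δ⁻¹ = δ') (e1 : δ * δ' = 1)
    (w : A (δ * δ')) (S : Finset (A δ × A δ'))
    (hS : T.Δ δ δ' w = ∑ p ∈ S, p.1 ⊗ₜ[k] p.2) :
    ∑ p ∈ S, lcast k π A h2 (T.s δ p.1) * p.2 =
      algebraMap k (A δ') (T.ε (lcast k π A e1 w)) := by
  have h := antipode_left' T δ δ' hδ h2 e1 w
  rw [hS, map_sum, map_sum] at h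
  simpa using h

theorem cl_sum (e δ : π) (he : e = 1) (h : e * δ = δ) (w : A (e * δ))
    (S : Finset (A e × A δ)) (hS : T.Δ e δ w = ∑ p ∈ S, p.1 ⊗ₜ[k] p.2) :
    ∑ p ∈ S, T.ε (lcast k π A he p.1) • p.2 = lcast k π A h w := by
  subst he
  have h0 := T.counit_left δ w
  rw [hS, map_sum, map_sum] at h0
  simp at h0; exact h0

theorem cr_sum (δ e : π) (he : e = 1) (h : δ * e = δ) (w : A (δ * e))
    (S : Finset (A δ × A e)) (hS : T.Δ δ e w = ∑ p ∈ S, p.1 ⊗ₜ[k] p.2) :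
    ∑ p ∈ S, T.ε (lcast k π A he p.2) • p.1 = lcast k π A h w := by
  subst he
  have h0 := T.counit_right δ w
  rw [hS, map_sum, map_sum] at h0
  simp at h0; exact h0

theorem φ_counit' (γ e : π) (he : e = 1) (h' : γ * e * γ⁻¹ = 1) (w : A e) :
    T.ε (lcast k π A h' (T.φ γ e w)) = T.ε (lcast k π A he w) := by
  subst he; exact T.φ_counit γ w

set_option synthInstance.maxHeartbeats 1000000 in
theorem coassoc_sum {W : Type u} [AddCommGroup W] [Module k W]
    (α β γ : π) (g : A α ⊗[k] (A β ⊗[k] A γ) →ₗ[k] W) (x : A (α * β * γ))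
    (S : Finset (A (α * β) × A γ))
    (hS : T.Δ (α * β) γ x = ∑ p ∈ S, p.1 ⊗ₜ[k] p.2)
    (Q : A (α * β) × A γ → Finset (A α × A β))
    (hQ : ∀ p ∈ S, T.Δ α β p.1 = ∑ q ∈ Q p, q.1 ⊗ₜ[k] q.2)
    (S' : Finset (A α × A (β * γ)))
    (hS' : T.Δ α (β * γ) (lcast k π A (mul_assoc α β γ) x) = ∑ p ∈ S', p.1 ⊗ₜ[k] p.2)
    (Q' : A α × A (β * γ) → Finset (A β × A γ))
    (hQ' : ∀ p ∈ S', T.Δ β γ p.2 = ∑ q ∈ Q' p, q.1 ⊗ₜ[k] q.2) :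
    ∑ p ∈ S, ∑ q ∈ Q p, g (q.1 ⊗ₜ[k] (q.2 ⊗ₜ[k] p.2)) =
      ∑ p ∈ S', ∑ q ∈ Q' p, g (p.1 ⊗ₜ[k] (q.1 ⊗ₜ[k] q.2)) := by
  have hc := T.coassoc α β γ x
  rw [show (cast (congrArg A (mul_assoc α β γ)) x : A (α * (β * γ))) =
      lcast k π A (mul_assoc α β γ) x from rfl] at hc
  have e1 : g ((TensorProduct.assoc k (A α) (A β) (A γ))
      (TensorProduct.map (T.Δ α β).toLinearMap LinearMap.id (T.Δ (α * β) γ x))) =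
      ∑ p ∈ S, ∑ q ∈ Q p, g (q.1 ⊗ₜ[k] (q.2 ⊗ₜ[k] p.2)) := by
    rw [hS, map_sum, map_sum, map_sum]
    refine Finset.sum_congr rfl fun p hp => ?_
    rw [TensorProduct.map_tmul]
    simp only [AlgHom.toLinearMap_apply, LinearMap.id_coe, id_eq]
    rw [hQ p hp, TensorProduct.sum_tmul, map_sum, map_sum]
    refine Finset.sum_congr rfl fun q hq => ?_
    simp
  have e2 : g (TensorProduct.map LinearMap.id (T.Δ β γ).toLinearMap
      (T.Δ α (β * γ) (lcast k π A (mul_assoc α β γ) x))) =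
      ∑ p ∈ S', ∑ q ∈ Q' p, g (p.1 ⊗ₜ[k] (q.1 ⊗ₜ[k] q.2)) := by
    rw [hS', map_sum, map_sum]
    refine Finset.sum_congr rfl fun p hp => ?_
    rw [TensorProduct.map_tmul]
    simp only [AlgHom.toLinearMap_apply, LinearMap.id_coe, id_eq]
    rw [hQ' p hp, TensorProduct.tmul_sum, map_sum]
  rw [← e1, ← e2, hc]

end TC
end Infra2
section Infra3
set_option linter.unusedSectionVars false

variable {k : Type u} [Field k] {π : Type u} [Group π]
  {A : π → Type u} [∀ α, Ring (A α)] [∀ α, Algebra k (A α)]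

namespace TC
variable (T : TCoalgStruct k π A)

theorem φ_mul' (β γ α : π) (pf : β * (γ * α * γ⁻¹) * β⁻¹ = β * γ * α * (β * γ)⁻¹)
    (x : A α) :
    lcast k π A pf (T.φ β (γ * α * γ⁻¹) (T.φ γ α x)) = T.φ (β * γ) α x :=
  T.φ_mul β γ α x

theorem φ_one' (α : π) (h : α = 1 * α * 1⁻¹) (x : A α) :
    T.φ 1 α x = lcast k π A h x := by
  apply (T.φ_bij 1 (1 * α * 1⁻¹)).1
  have pf : (1 : π) * (1 * α * 1⁻¹) * 1⁻¹ = 1 * 1 * α * (1 * 1)⁻¹ := by group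
  have pf2 : (1:π) * α * 1⁻¹ = (1*1) * α * (1*1)⁻¹ := by group
  have pf3 : (1:π) * α * 1⁻¹ = 1 * (1 * α * 1⁻¹) * 1⁻¹ := by group
  have hm := φ_mul' T 1 1 α pf x
  have hidx := φ_index T (one_mul (1:π)).symm pf2 x
  rw [hidx] at hm
  apply lcast_inj (k := k) pf
  rw [hm, φ_lcast T 1 h pf3 x, lcast_lcast]

theorem φ_inv_φ (γ α : π) (h : α = γ⁻¹ * (γ * α * γ⁻¹) * γ⁻¹⁻¹) (x : A α) :
    T.φ γ⁻¹ (γ * α * γ⁻¹) (T.φ γ α x) = lcast k π A h x := by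
  have pf : γ⁻¹ * (γ * α * γ⁻¹) * γ⁻¹⁻¹ = γ⁻¹ * γ * α * (γ⁻¹ * γ)⁻¹ := by group
  have pf2 : (1:π) * α * 1⁻¹ = (γ⁻¹*γ) * α * (γ⁻¹*γ)⁻¹ := by group
  have pf3 : α = 1 * α * 1⁻¹ := by group
  have hm := φ_mul' T γ⁻¹ γ α pf x
  have hidx := φ_index T (inv_mul_cancel γ).symm pf2 x
  rw [hidx, φ_one' T α pf3 x, lcast_lcast] at hm
  apply lcast_inj (k := k) pf
  rw [hm, lcast_lcast]

theorem φ_φ_inv (γ α : π) (h : α = γ * (γ⁻¹ * α * γ⁻¹⁻¹) * γ⁻¹) (x : A α) :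
    T.φ γ (γ⁻¹ * α * γ⁻¹⁻¹) (T.φ γ⁻¹ α x) = lcast k π A h x := by
  have pf2 : γ⁻¹⁻¹ * (γ⁻¹ * α * γ⁻¹⁻¹) * γ⁻¹⁻¹⁻¹ = γ * (γ⁻¹ * α * γ⁻¹⁻¹) * γ⁻¹ := by group
  have pf3 : α = γ⁻¹⁻¹ * (γ⁻¹ * α * γ⁻¹⁻¹) * γ⁻¹⁻¹⁻¹ := by group
  have hidx := φ_index T (inv_inv γ) pf2 (T.φ γ⁻¹ α x)
  rw [hidx, φ_inv_φ T γ⁻¹ α pf3 x, lcast_lcast]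

theorem s_one (δ : π) : T.s δ (1 : A δ) = 1 := by
  have h := antipode_right' T δ⁻¹ δ (inv_inv δ).symm rfl (inv_mul_cancel δ) 1
  rw [map_one, Algebra.TensorProduct.one_def] at h
  simpa [lcast_one, lcast_refl] using h

end TC
end Infra3
section Anti
set_option linter.unusedSectionVars false
set_option maxHeartbeats 1000000

variable {k : Type u} [Field k] {π : Type u} [Group π]
  {A : π → Type u} [∀ α, Ring (A α)] [∀ α, Algebra k (A α)]

namespace TC
variable (T : TCoalgStruct k π A)

theorem s_antimul (γ : π) (x y : A γ) : T.s γ (x * y) = T.s γ y * T.s γ x := by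
  have eγ : γ = γ * γ⁻¹ * γ := by group
  have e1 : γ * γ⁻¹ = 1 := mul_inv_cancel γ
  have e1' : γ⁻¹ * γ = 1 := inv_mul_cancel γ
  have eγ' : γ * (γ⁻¹ * γ) = γ := by group
  have eass : γ * γ⁻¹ * γ = γ * (γ⁻¹ * γ) := mul_assoc γ γ⁻¹ γ
  obtain ⟨Sx, hSx⟩ := TensorProduct.exists_finset (T.Δ (γ * γ⁻¹) γ (lcast k π A eγ x))
  obtain ⟨Sy, hSy⟩ := TensorProduct.exists_finset (T.Δ (γ * γ⁻¹) γ (lcast k π A eγ y))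
  have hQ0 : ∀ p : A (γ * γ⁻¹) × A γ, ∃ S : Finset (A γ × A γ⁻¹),
      T.Δ γ γ⁻¹ p.1 = ∑ q ∈ S, q.1 ⊗ₜ[k] q.2 := fun p => TensorProduct.exists_finset _
  choose Qd hQd using hQ0
  obtain ⟨Sx', hSx'⟩ := TensorProduct.exists_finset
    (T.Δ γ (γ⁻¹ * γ) (lcast k π A eass (lcast k π A eγ x)))
  obtain ⟨Sy', hSy'⟩ := TensorProduct.exists_finset
    (T.Δ γ (γ⁻¹ * γ) (lcast k π A eass (lcast k π A eγ y)))
  have hQ0' : ∀ p : A γ × A (γ⁻¹ * γ), ∃ S : Finset (A γ⁻¹ × A γ),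
      T.Δ γ⁻¹ γ p.2 = ∑ q ∈ S, q.1 ⊗ₜ[k] q.2 := fun p => TensorProduct.exists_finset _
  choose Qd' hQd' using hQ0'
  set E : A γ⁻¹ := ∑ p ∈ Sx, ∑ py ∈ Sy, ∑ q ∈ Qd p, ∑ qy ∈ Qd py,
      T.s γ (q.1 * qy.1) * ((q.2 * qy.2) * (T.s γ py.2 * T.s γ p.2)) with hE
  -- Part (b) : E = s y * s x
  have key : ∀ p py : A (γ * γ⁻¹) × A γ,
      ∑ q ∈ Qd p, ∑ qy ∈ Qd py, T.s γ (q.1 * qy.1) * (q.2 * qy.2) =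
        algebraMap k (A γ⁻¹) (T.ε (lcast k π A e1 (p.1 * py.1))) := by
    intro p py
    have h := antipode_left' T γ γ⁻¹ (inv_inv γ).symm rfl e1 (p.1 * py.1)
    rw [map_mul, hQd p, hQd py, Finset.sum_mul_sum] at h
    simp only [Algebra.TensorProduct.tmul_mul_tmul] at h
    simp only [map_sum] at h
    simp only [TensorProduct.map_tmul, LinearMap.mul'_apply, LinearMap.coe_comp,
      Function.comp_apply, LinearMap.id_coe, id_eq, lcast_refl] at h
    exact h
  have hb : E = T.s γ y * T.s γ x := by
    have st1 : E = ∑ p ∈ Sx, ∑ py ∈ Sy,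
        (∑ q ∈ Qd p, ∑ qy ∈ Qd py, T.s γ (q.1 * qy.1) * (q.2 * qy.2)) *
          (T.s γ py.2 * T.s γ p.2) := by
      rw [hE]
      refine Finset.sum_congr rfl fun p _ => Finset.sum_congr rfl fun py _ => ?_
      rw [Finset.sum_mul]
      refine Finset.sum_congr rfl fun q _ => ?_
      rw [Finset.sum_mul]
      refine Finset.sum_congr rfl fun qy _ => ?_
      exact (mul_assoc _ _ _).symm
    have st2 : ∀ p py : A (γ * γ⁻¹) × A γ,
        (∑ q ∈ Qd p, ∑ qy ∈ Qd py, T.s γ (q.1 * qy.1) * (q.2 * qy.2)) *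
          (T.s γ py.2 * T.s γ p.2) =
        (T.ε (lcast k π A e1 py.1) • T.s γ py.2) *
          (T.ε (lcast k π A e1 p.1) • T.s γ p.2) := by
      intro p py
      rw [key p py, lcast_mul, map_mul, smul_mul_smul_comm, Algebra.smul_def,
        mul_comm (T.ε (lcast k π A e1 py.1)) (T.ε (lcast k π A e1 p.1))]
    rw [st1]
    simp only [st2]
    rw [Finset.sum_comm, ← Finset.sum_mul_sum]
    have hy : ∑ py ∈ Sy, T.ε (lcast k π A e1 py.1) • T.s γ py.2 = T.s γ y := by
      have h := cl_sum T (γ * γ⁻¹) γ e1 eγ.symm (lcast k π A eγ y) Sy hSy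
      rw [lcast_lcast, lcast_refl] at h
      rw [← h, map_sum]
      exact Finset.sum_congr rfl fun py _ => (map_smul _ _ _).symm
    have hx : ∑ p ∈ Sx, T.ε (lcast k π A e1 p.1) • T.s γ p.2 = T.s γ x := by
      have h := cl_sum T (γ * γ⁻¹) γ e1 eγ.symm (lcast k π A eγ x) Sx hSx
      rw [lcast_lcast, lcast_refl] at h
      rw [← h, map_sum]
      exact Finset.sum_congr rfl fun p _ => (map_smul _ _ _).symm
    rw [hy, hx]
  -- Part (a) : E = s (x*y)
  set gx : A γ ⊗[k] (A γ⁻¹ ⊗[k] A γ) →ₗ[k] A γ⁻¹ :=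
    ∑ py ∈ Sy, ∑ qy ∈ Qd py,
      (LinearMap.mul' k (A γ⁻¹)).comp
        (TensorProduct.map ((T.s γ).comp (LinearMap.mulRight k qy.1))
          ((LinearMap.mul' k (A γ⁻¹)).comp
            (TensorProduct.map (LinearMap.mulRight k qy.2)
              ((LinearMap.mulLeft k (T.s γ py.2)).comp (T.s γ))))) with hgx_def
  have hgx : ∀ (c : A γ) (d : A γ⁻¹) (z : A γ), gx (c ⊗ₜ[k] (d ⊗ₜ[k] z)) =
      ∑ py ∈ Sy, ∑ qy ∈ Qd py,
        T.s γ (c * qy.1) * ((d * qy.2) * (T.s γ py.2 * T.s γ z)) := by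
    intro c d z
    rw [hgx_def]
    simp only [LinearMap.coe_sum, Finset.sum_apply, LinearMap.coe_comp,
      Function.comp_apply, TensorProduct.map_tmul, LinearMap.mul'_apply,
      LinearMap.mulRight_apply, LinearMap.mulLeft_apply]
  set gy : A γ ⊗[k] (A γ⁻¹ ⊗[k] A γ) →ₗ[k] A γ⁻¹ :=
    ∑ p' ∈ Sx', ∑ r ∈ Qd' p',
      (LinearMap.mul' k (A γ⁻¹)).comp
        (TensorProduct.map ((T.s γ).comp (LinearMap.mulLeft k p'.1))
          ((LinearMap.mul' k (A γ⁻¹)).comp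
            (TensorProduct.map (LinearMap.mulLeft k r.1)
              ((LinearMap.mulRight k (T.s γ r.2)).comp (T.s γ))))) with hgy_def
  have hgy : ∀ (c : A γ) (d : A γ⁻¹) (z : A γ), gy (c ⊗ₜ[k] (d ⊗ₜ[k] z)) =
      ∑ p' ∈ Sx', ∑ r ∈ Qd' p',
        T.s γ (p'.1 * c) * ((r.1 * d) * (T.s γ z * T.s γ r.2)) := by
    intro c d z
    rw [hgy_def]
    simp only [LinearMap.coe_sum, Finset.sum_apply, LinearMap.coe_comp,
      Function.comp_apply, TensorProduct.map_tmul, LinearMap.mul'_apply,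
      LinearMap.mulRight_apply, LinearMap.mulLeft_apply]
  have stA1 : E = ∑ p ∈ Sx, ∑ q ∈ Qd p, gx (q.1 ⊗ₜ[k] (q.2 ⊗ₜ[k] p.2)) := by
    rw [hE]
    refine Finset.sum_congr rfl fun p _ => ?_
    rw [Finset.sum_comm]
    refine Finset.sum_congr rfl fun q _ => ?_
    rw [hgx]
  have stA2 : ∑ p ∈ Sx, ∑ q ∈ Qd p, gx (q.1 ⊗ₜ[k] (q.2 ⊗ₜ[k] p.2)) =
      ∑ p' ∈ Sx', ∑ r ∈ Qd' p', gx (p'.1 ⊗ₜ[k] (r.1 ⊗ₜ[k] r.2)) :=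
    coassoc_sum T γ γ⁻¹ γ gx (lcast k π A eγ x) Sx hSx Qd (fun p _ => hQd p) Sx' hSx' Qd' (fun p _ => hQd' p)
  have stA3 : ∑ p' ∈ Sx', ∑ r ∈ Qd' p', gx (p'.1 ⊗ₜ[k] (r.1 ⊗ₜ[k] r.2)) =
      ∑ py ∈ Sy, ∑ qy ∈ Qd py, gy (qy.1 ⊗ₜ[k] (qy.2 ⊗ₜ[k] py.2)) := by
    simp only [hgx, hgy]
    -- reorder (p', r, py, qy) → (py, qy, p', r)
    have l1 : ∀ p' : A γ × A (γ⁻¹ * γ),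
        (∑ r ∈ Qd' p', ∑ py ∈ Sy, ∑ qy ∈ Qd py,
          T.s γ (p'.1 * qy.1) * ((r.1 * qy.2) * (T.s γ py.2 * T.s γ r.2))) =
        ∑ py ∈ Sy, ∑ qy ∈ Qd py, ∑ r ∈ Qd' p',
          T.s γ (p'.1 * qy.1) * ((r.1 * qy.2) * (T.s γ py.2 * T.s γ r.2)) := by
      intro p'
      rw [Finset.sum_comm (s := Qd' p') (t := Sy)]
      exact Finset.sum_congr rfl fun py _ => Finset.sum_comm
    simp only [l1]
    rw [Finset.sum_comm (s := Sx') (t := Sy)]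
    refine Finset.sum_congr rfl fun py _ => Finset.sum_comm
  have stA4 : ∑ py ∈ Sy, ∑ qy ∈ Qd py, gy (qy.1 ⊗ₜ[k] (qy.2 ⊗ₜ[k] py.2)) =
      ∑ py' ∈ Sy', ∑ r' ∈ Qd' py', gy (py'.1 ⊗ₜ[k] (r'.1 ⊗ₜ[k] r'.2)) :=
    coassoc_sum T γ γ⁻¹ γ gy (lcast k π A eγ y) Sy hSy Qd (fun p _ => hQd p)
      Sy' hSy' Qd' (fun p _ => hQd' p)
  -- collapse chain
  have inner1 : ∀ (py' p' : A γ × A (γ⁻¹ * γ)) (r : A γ⁻¹ × A γ),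
      (∑ r' ∈ Qd' py',
        T.s γ (p'.1 * py'.1) * ((r.1 * r'.1) * (T.s γ r'.2 * T.s γ r.2))) =
        T.ε (lcast k π A e1' py'.2) • (T.s γ (p'.1 * py'.1) * (r.1 * T.s γ r.2)) := by
    intro py' p' r
    have har := ar_sum T γ⁻¹ γ (inv_inv γ).symm rfl e1' py'.2 (Qd' py') (hQd' py')
    simp only [lcast_refl] at har
    have l : (∑ r' ∈ Qd' py',
        T.s γ (p'.1 * py'.1) * ((r.1 * r'.1) * (T.s γ r'.2 * T.s γ r.2))) =
        T.s γ (p'.1 * py'.1) *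
          (r.1 * ((∑ r' ∈ Qd' py', r'.1 * T.s γ r'.2) * T.s γ r.2)) := by
      rw [Finset.sum_mul, Finset.mul_sum, Finset.mul_sum]
      refine Finset.sum_congr rfl fun r' _ => ?_
      rw [mul_assoc r.1 r'.1, ← mul_assoc r'.1]
    rw [l, har, ← Algebra.smul_def, mul_smul_comm, mul_smul_comm]
  have inner2 : ∀ (p' : A γ × A (γ⁻¹ * γ)) (r : A γ⁻¹ × A γ),
      (∑ py' ∈ Sy',
        T.ε (lcast k π A e1' py'.2) • (T.s γ (p'.1 * py'.1) * (r.1 * T.s γ r.2))) =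
        T.s γ (p'.1 * y) * (r.1 * T.s γ r.2) := by
    intro p' r
    have h := cr_sum T γ (γ⁻¹ * γ) e1' eγ' (lcast k π A eass (lcast k π A eγ y)) Sy' hSy'
    rw [lcast_lcast, lcast_lcast, lcast_refl] at h
    calc (∑ py' ∈ Sy',
        T.ε (lcast k π A e1' py'.2) • (T.s γ (p'.1 * py'.1) * (r.1 * T.s γ r.2))) =
        T.s γ (p'.1 * (∑ py' ∈ Sy', T.ε (lcast k π A e1' py'.2) • py'.1)) *
          (r.1 * T.s γ r.2) := by
          rw [Finset.mul_sum, map_sum, Finset.sum_mul]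
          refine Finset.sum_congr rfl fun py' _ => ?_
          rw [mul_smul_comm, map_smul, smul_mul_assoc]
      _ = T.s γ (p'.1 * y) * (r.1 * T.s γ r.2) := by rw [h]
  have inner3 : ∀ p' : A γ × A (γ⁻¹ * γ),
      (∑ r ∈ Qd' p', T.s γ (p'.1 * y) * (r.1 * T.s γ r.2)) =
        T.ε (lcast k π A e1' p'.2) • T.s γ (p'.1 * y) := by
    intro p'
    have har := ar_sum T γ⁻¹ γ (inv_inv γ).symm rfl e1' p'.2 (Qd' p') (hQd' p')
    simp only [lcast_refl] at har
    rw [← Finset.mul_sum, har, ← Algebra.commutes, ← Algebra.smul_def]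
  have inner4 : (∑ p' ∈ Sx', T.ε (lcast k π A e1' p'.2) • T.s γ (p'.1 * y)) =
      T.s γ (x * y) := by
    have h := cr_sum T γ (γ⁻¹ * γ) e1' eγ' (lcast k π A eass (lcast k π A eγ x)) Sx' hSx'
    rw [lcast_lcast, lcast_lcast, lcast_refl] at h
    calc (∑ p' ∈ Sx', T.ε (lcast k π A e1' p'.2) • T.s γ (p'.1 * y)) =
        T.s γ ((∑ p' ∈ Sx', T.ε (lcast k π A e1' p'.2) • p'.1) * y) := by
          rw [Finset.sum_mul, map_sum]
          refine Finset.sum_congr rfl fun p' _ => ?_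
          rw [smul_mul_assoc, map_smul]
      _ = T.s γ (x * y) := by rw [h]
  have stA5 : ∑ py' ∈ Sy', ∑ r' ∈ Qd' py', gy (py'.1 ⊗ₜ[k] (r'.1 ⊗ₜ[k] r'.2)) =
      T.s γ (x * y) := by
    simp only [hgy]
    -- reorder (py', r', p', r) → (p', r, py', r')
    have l1 : ∀ py' : A γ × A (γ⁻¹ * γ),
        (∑ r' ∈ Qd' py', ∑ p' ∈ Sx', ∑ r ∈ Qd' p',
          T.s γ (p'.1 * py'.1) * ((r.1 * r'.1) * (T.s γ r'.2 * T.s γ r.2))) =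
        ∑ p' ∈ Sx', ∑ r ∈ Qd' p', ∑ r' ∈ Qd' py',
          T.s γ (p'.1 * py'.1) * ((r.1 * r'.1) * (T.s γ r'.2 * T.s γ r.2)) := by
      intro py'
      rw [Finset.sum_comm (s := Qd' py') (t := Sx')]
      exact Finset.sum_congr rfl fun p' _ => Finset.sum_comm
    simp only [l1, inner1]
    rw [Finset.sum_comm (s := Sy') (t := Sx')]
    have l2 : ∀ p' : A γ × A (γ⁻¹ * γ),
        (∑ py' ∈ Sy', ∑ r ∈ Qd' p',
          T.ε (lcast k π A e1' py'.2) • (T.s γ (p'.1 * py'.1) * (r.1 * T.s γ r.2))) =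
        ∑ r ∈ Qd' p', ∑ py' ∈ Sy',
          T.ε (lcast k π A e1' py'.2) • (T.s γ (p'.1 * py'.1) * (r.1 * T.s γ r.2)) :=
      fun p' => Finset.sum_comm
    simp only [l2, inner2, inner3]
    exact inner4
  rw [← hb, stA1, stA2, stA3, stA4, stA5]
end TC
end Anti
section Uniq
set_option linter.unusedSectionVars false
set_option maxHeartbeats 1000000

variable {k : Type u} [Field k] {π : Type u} [Group π]
  {A : π → Type u} [∀ α, Ring (A α)] [∀ α, Algebra k (A α)]

namespace TC
variable (T : TCoalgStruct k π A)

theorem antipode_unique (s' : ∀ δ : π, A δ →ₗ[k] A δ⁻¹)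
    (hs' : ∀ (δ : π) (w : A (δ * δ⁻¹)) (S : Finset (A δ × A δ⁻¹)),
      T.Δ δ δ⁻¹ w = ∑ p ∈ S, p.1 ⊗ₜ[k] p.2 →
      ∑ p ∈ S, s' δ p.1 * p.2 =
        algebraMap k (A δ⁻¹) (T.ε (lcast k π A (mul_inv_cancel δ) w)))
    (δ : π) (x : A δ) : s' δ x = T.s δ x := by
  have eδ : δ = δ * δ⁻¹ * δ := by group
  have e1 : δ * δ⁻¹ = 1 := mul_inv_cancel δ
  have e1' : δ⁻¹ * δ = 1 := inv_mul_cancel δ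
  have eδ' : δ * (δ⁻¹ * δ) = δ := by group
  have eass : δ * δ⁻¹ * δ = δ * (δ⁻¹ * δ) := mul_assoc δ δ⁻¹ δ
  obtain ⟨S2, hS2⟩ := TensorProduct.exists_finset (T.Δ (δ * δ⁻¹) δ (lcast k π A eδ x))
  have hQ0 : ∀ p : A (δ * δ⁻¹) × A δ, ∃ S : Finset (A δ × A δ⁻¹),
      T.Δ δ δ⁻¹ p.1 = ∑ q ∈ S, q.1 ⊗ₜ[k] q.2 := fun p => TensorProduct.exists_finset _
  choose Qd hQd using hQ0
  obtain ⟨S1, hS1⟩ := TensorProduct.exists_finset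
    (T.Δ δ (δ⁻¹ * δ) (lcast k π A eass (lcast k π A eδ x)))
  have hQ0' : ∀ p : A δ × A (δ⁻¹ * δ), ∃ S : Finset (A δ⁻¹ × A δ),
      T.Δ δ⁻¹ δ p.2 = ∑ q ∈ S, q.1 ⊗ₜ[k] q.2 := fun p => TensorProduct.exists_finset _
  choose Qd' hQd' using hQ0'
  set g : A δ ⊗[k] (A δ⁻¹ ⊗[k] A δ) →ₗ[k] A δ⁻¹ :=
    (LinearMap.mul' k (A δ⁻¹)).comp
      (TensorProduct.map (s' δ)
        ((LinearMap.mul' k (A δ⁻¹)).comp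
          (TensorProduct.map LinearMap.id (T.s δ)))) with hg_def
  have hg : ∀ (c : A δ) (d : A δ⁻¹) (z : A δ),
      g (c ⊗ₜ[k] (d ⊗ₜ[k] z)) = s' δ c * (d * T.s δ z) := by
    intro c d z
    rw [hg_def]
    simp only [LinearMap.coe_comp, Function.comp_apply, TensorProduct.map_tmul,
      LinearMap.mul'_apply, LinearMap.id_coe, id_eq]
  have hco := coassoc_sum T δ δ⁻¹ δ g (lcast k π A eδ x) S2 hS2 Qd (fun p _ => hQd p)
    S1 hS1 Qd' (fun p _ => hQd' p)
  -- evaluate the grouping-1 side : = s' δ x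
  have hE1 : ∑ p' ∈ S1, ∑ r ∈ Qd' p', g (p'.1 ⊗ₜ[k] (r.1 ⊗ₜ[k] r.2)) = s' δ x := by
    simp only [hg]
    have hin : ∀ p' : A δ × A (δ⁻¹ * δ),
        (∑ r ∈ Qd' p', s' δ p'.1 * (r.1 * T.s δ r.2)) =
          T.ε (lcast k π A e1' p'.2) • s' δ p'.1 := by
      intro p'
      have har := ar_sum T δ⁻¹ δ (inv_inv δ).symm rfl e1' p'.2 (Qd' p') (hQd' p')
      simp only [lcast_refl] at har
      rw [← Finset.mul_sum, har, ← Algebra.commutes, ← Algebra.smul_def]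
    simp only [hin]
    have h := cr_sum T δ (δ⁻¹ * δ) e1' eδ' (lcast k π A eass (lcast k π A eδ x)) S1 hS1
    rw [lcast_lcast, lcast_lcast, lcast_refl] at h
    calc ∑ p' ∈ S1, T.ε (lcast k π A e1' p'.2) • s' δ p'.1
        = s' δ (∑ p' ∈ S1, T.ε (lcast k π A e1' p'.2) • p'.1) := by
          rw [map_sum]
          exact Finset.sum_congr rfl fun p _ => (map_smul _ _ _).symm
      _ = s' δ x := by rw [h]
  -- evaluate the grouping-2 side : = s δ x
  have hE2 : ∑ p ∈ S2, ∑ q ∈ Qd p, g (q.1 ⊗ₜ[k] (q.2 ⊗ₜ[k] p.2)) = T.s δ x := by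
    simp only [hg]
    have hin : ∀ p : A (δ * δ⁻¹) × A δ,
        (∑ q ∈ Qd p, s' δ q.1 * (q.2 * T.s δ p.2)) =
          T.ε (lcast k π A e1 p.1) • T.s δ p.2 := by
      intro p
      have hl : (∑ q ∈ Qd p, s' δ q.1 * (q.2 * T.s δ p.2)) =
          (∑ q ∈ Qd p, s' δ q.1 * q.2) * T.s δ p.2 := by
        rw [Finset.sum_mul]
        exact Finset.sum_congr rfl fun q _ => (mul_assoc _ _ _).symm
      rw [hl, hs' δ p.1 (Qd p) (hQd p), ← Algebra.smul_def]
    simp only [hin]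
    have h := cl_sum T (δ * δ⁻¹) δ e1 eδ.symm (lcast k π A eδ x) S2 hS2
    rw [lcast_lcast, lcast_refl] at h
    rw [← h, map_sum]
    exact Finset.sum_congr rfl fun p _ => (map_smul _ _ _).symm
  rw [← hE1, ← hco, hE2]
end TC
end Uniq
section SPhi
set_option linter.unusedSectionVars false
set_option maxHeartbeats 1000000

variable {k : Type u} [Field k] {π : Type u} [Group π]
  {A : π → Type u} [∀ α, Ring (A α)] [∀ α, Algebra k (A α)]

namespace TC
variable (T : TCoalgStruct k π A)

theorem s_φ (g₀ δ : π) (x : A δ) (h₂ : (g₀ * δ * g₀⁻¹)⁻¹ = g₀ * δ⁻¹ * g₀⁻¹) :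
    lcast k π A h₂ (T.s (g₀ * δ * g₀⁻¹) (T.φ g₀ δ x)) = T.φ g₀ δ⁻¹ (T.s δ x) := by
  have e₃ : ∀ δ' : π, (g₀ * δ' * g₀⁻¹)⁻¹ = g₀ * δ'⁻¹ * g₀⁻¹ := fun δ' => by group
  have e₄ : ∀ δ' : π, g₀⁻¹ * (g₀ * δ'⁻¹ * g₀⁻¹) * g₀⁻¹⁻¹ = δ'⁻¹ := fun δ' => by group
  set s' : ∀ δ' : π, A δ' →ₗ[k] A δ'⁻¹ := fun δ' =>
    (lcast k π A (e₄ δ')).comp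
      ((T.φ g₀⁻¹ (g₀ * δ'⁻¹ * g₀⁻¹)).toLinearMap.comp
        ((lcast k π A (e₃ δ')).comp
          ((T.s (g₀ * δ' * g₀⁻¹)).comp (T.φ g₀ δ').toLinearMap))) with hs'def
  have hs'app : ∀ (δ' : π) (z : A δ'), s' δ' z =
      lcast k π A (e₄ δ') (T.φ g₀⁻¹ (g₀ * δ'⁻¹ * g₀⁻¹)
        (lcast k π A (e₃ δ') (T.s (g₀ * δ' * g₀⁻¹) (T.φ g₀ δ' z)))) := by
    intro δ' z
    rw [hs'def]
    simp only [LinearMap.coe_comp, Function.comp_apply, AlgHom.toLinearMap_apply]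
  have hs' : ∀ (δ' : π) (w : A (δ' * δ'⁻¹)) (S : Finset (A δ' × A δ'⁻¹)),
      T.Δ δ' δ'⁻¹ w = ∑ p ∈ S, p.1 ⊗ₜ[k] p.2 →
      ∑ p ∈ S, s' δ' p.1 * p.2 =
        algebraMap k (A δ'⁻¹) (T.ε (lcast k π A (mul_inv_cancel δ') w)) := by
    intro δ' w S hS
    have e1 : δ' * δ'⁻¹ = 1 := mul_inv_cancel δ'
    have pfc : g₀ * (δ' * δ'⁻¹) * g₀⁻¹ = g₀ * δ' * g₀⁻¹ * (g₀ * δ'⁻¹ * g₀⁻¹) := by group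
    have hALm := antipode_left' T (g₀ * δ' * g₀⁻¹) (g₀ * δ'⁻¹ * g₀⁻¹) (by group) (e₃ δ')
      (by group) (cast (congrArg A pfc) (T.φ g₀ (δ' * δ'⁻¹) w))
    rw [← T.φ_comul g₀ δ' δ'⁻¹ w, hS] at hALm
    simp only [map_sum, TensorProduct.map_tmul, LinearMap.mul'_apply, LinearMap.coe_comp,
      Function.comp_apply, LinearMap.id_coe, id_eq, AlgHom.toLinearMap_apply] at hALm
    rw [show (cast (congrArg A pfc) (T.φ g₀ (δ' * δ'⁻¹) w) : A _) =
        lcast k π A pfc (T.φ g₀ (δ' * δ'⁻¹) w) from rfl, lcast_lcast,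
      φ_counit' T g₀ (δ' * δ'⁻¹) e1 _ w] at hALm
    calc ∑ p ∈ S, s' δ' p.1 * p.2
        = ∑ p ∈ S, lcast k π A (e₄ δ') (T.φ g₀⁻¹ (g₀ * δ'⁻¹ * g₀⁻¹)
            (lcast k π A (e₃ δ') (T.s (g₀ * δ' * g₀⁻¹) (T.φ g₀ δ' p.1)) *
              T.φ g₀ δ'⁻¹ p.2)) := by
          refine Finset.sum_congr rfl fun p _ => ?_
          rw [map_mul, lcast_mul, ← hs'app δ' p.1,
            φ_inv_φ T g₀ δ'⁻¹ (by group) p.2, lcast_lcast, lcast_refl]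
      _ = lcast k π A (e₄ δ') (T.φ g₀⁻¹ (g₀ * δ'⁻¹ * g₀⁻¹)
            (∑ p ∈ S, lcast k π A (e₃ δ') (T.s (g₀ * δ' * g₀⁻¹) (T.φ g₀ δ' p.1)) *
              T.φ g₀ δ'⁻¹ p.2)) := by rw [map_sum, map_sum]
      _ = algebraMap k (A δ'⁻¹) (T.ε (lcast k π A e1 w)) := by
          rw [hALm, AlgHom.commutes, lcast_algebraMap]
  have hu := antipode_unique T s' hs' δ x
  rw [hs'app δ x] at hu
  rw [← hu, φ_lcast T g₀ (e₄ δ) (by group),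
    φ_φ_inv T g₀ (g₀ * δ⁻¹ * g₀⁻¹) (by group), lcast_lcast, lcast_lcast]
end TC
end SPhi
section Star
set_option linter.unusedSectionVars false
set_option maxHeartbeats 1000000

variable {k : Type u} [Field k] {π : Type u} [Group π]
  {A : π → Type u} [∀ α, Ring (A α)] [∀ α, Algebra k (A α)]

namespace TC
variable (T : TCoalgStruct k π A)

/-- The twist map `b ↦ s(φ(b))` used in the Drinfeld element. -/
noncomputable def Fmap (β : π) : A β⁻¹ →ₗ[k] A β :=
  (lcast k π A (inv_inv β)).comp ((T.s β⁻¹).comp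
    ((lcast k π A (by group : β * β⁻¹ * β⁻¹ = β⁻¹)).comp (T.φ β β⁻¹).toLinearMap))

/-- `a ⊗ b ↦ s(φ(b)) * a`. -/
noncomputable def Umap (β : π) : A β ⊗[k] A β⁻¹ →ₗ[k] A β :=
  (LinearMap.mul' k (A β)).comp
    ((TensorProduct.comm k (A β) (A β)).toLinearMap.comp
      (TensorProduct.map LinearMap.id (Fmap T β)))

theorem Fmap_apply (β : π) (eF : β * β⁻¹ * β⁻¹ = β⁻¹) (b : A β⁻¹) :
    Fmap T β b = lcast k π A (inv_inv β)
      (T.s β⁻¹ (lcast k π A eF (T.φ β β⁻¹ b))) := by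
  simp only [Fmap, LinearMap.coe_comp, Function.comp_apply, AlgHom.toLinearMap_apply]

theorem Umap_apply (β : π) (a : A β) (b : A β⁻¹) :
    Umap T β (a ⊗ₜ[k] b) = Fmap T β b * a := by
  simp only [Umap, LinearMap.coe_comp, Function.comp_apply, TensorProduct.map_tmul,
    LinearEquiv.coe_coe, TensorProduct.comm_tmul, LinearMap.mul'_apply, LinearMap.id_coe,
    id_eq]

variable (Q : QTStruct k π A T)

theorem drinfeld_eq (β : π) : drinfeld k π A T Q β = Umap T β (Q.R β β⁻¹) := rfl

theorem Fmap_mul_rev (β : π) (b c : A β⁻¹) :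
    Fmap T β (b * c) = Fmap T β c * Fmap T β b := by
  have eF : β * β⁻¹ * β⁻¹ = β⁻¹ := by group
  rw [Fmap_apply T β eF, Fmap_apply T β eF, Fmap_apply T β eF, map_mul, lcast_mul,
    s_antimul, lcast_mul]

theorem star_lemma (β : π) (w : A (β * β⁻¹)) (S : Finset (A β × A β⁻¹))
    (hS : T.Δ β β⁻¹ w = ∑ q ∈ S, q.1 ⊗ₜ[k] q.2)
    (SR : Finset (A β × A β⁻¹)) (hR : Q.R β β⁻¹ = ∑ i ∈ SR, i.1 ⊗ₜ[k] i.2)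
    (e1 : β * β⁻¹ = 1) :
    ∑ i ∈ SR, ∑ q ∈ S, Fmap T β (i.2 * q.2) * (i.1 * q.1) =
      T.ε (lcast k π A e1 w) • drinfeld k π A T Q β := by
  have pfD : β * β⁻¹ = β * β⁻¹ * β⁻¹ * β := by group
  have eG : β⁻¹ * (β * β⁻¹ * β⁻¹) * β⁻¹⁻¹ = β⁻¹ := by group
  obtain ⟨SD, hSD⟩ := TensorProduct.exists_finset
    (T.Δ (β * β⁻¹ * β⁻¹) β (lcast k π A pfD w))
  have hrel := Q.R_rel1 β β⁻¹ w
  rw [show (cast (congrArg A pfD) w : A _) = lcast k π A pfD w from rfl] at hrel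
  rw [hSD, hR, hS] at hrel
  have hrel2 := congrArg (Umap T β) hrel
  simp only [map_sum, TensorProduct.map_tmul, LinearEquiv.coe_coe,
    TensorProduct.comm_tmul, LinearMap.coe_comp, Function.comp_apply,
    LinearMap.id_coe, id_eq, AlgHom.toLinearMap_apply] at hrel2
  simp only [Finset.sum_mul_sum] at hrel2
  simp only [Algebra.TensorProduct.tmul_mul_tmul] at hrel2
  simp only [map_sum] at hrel2
  simp only [Umap_apply] at hrel2
  -- hrel2 : ∑ i ∑ q, F(i2*q2)*(i1*q1) = ∑ j ∑ i, F(G j1 * i2) * (j2 * i1)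
  rw [hrel2]
  -- massage the right-hand side
  have hFG : ∀ z : A (β * β⁻¹ * β⁻¹),
      Fmap T β (lcast k π A eG (T.φ β⁻¹ (β * β⁻¹ * β⁻¹) z)) =
        lcast k π A (by group : (β * β⁻¹ * β⁻¹)⁻¹ = β) (T.s (β * β⁻¹ * β⁻¹) z) := by
    intro z
    have eF : β * β⁻¹ * β⁻¹ = β⁻¹ := by group
    rw [Fmap_apply T β eF, φ_lcast T β eG (by rw [eG]) _,
      φ_φ_inv T β (β * β⁻¹ * β⁻¹) (by group) z, lcast_lcast, lcast_lcast,
      s_lcast T _ (by group) z, lcast_lcast]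
  have hcol : ∑ j ∈ SD, Fmap T β (lcast k π A eG (T.φ β⁻¹ (β * β⁻¹ * β⁻¹) j.1)) * j.2 =
      algebraMap k (A β) (T.ε (lcast k π A e1 w)) := by
    have hal := al_sum T (β * β⁻¹ * β⁻¹) β (by group) (by group)
      (by group) (lcast k π A pfD w) SD hSD
    rw [lcast_lcast] at hal
    rw [← hal]
    exact Finset.sum_congr rfl fun j _ => by rw [hFG j.1]
  calc ∑ j ∈ SD, ∑ i ∈ SR,
        Fmap T β (lcast k π A eG (T.φ β⁻¹ (β * β⁻¹ * β⁻¹) j.1) * i.2) * (j.2 * i.1)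
      = ∑ i ∈ SR, ∑ j ∈ SD, Fmap T β i.2 *
          ((Fmap T β (lcast k π A eG (T.φ β⁻¹ (β * β⁻¹ * β⁻¹) j.1)) * j.2) * i.1) := by
        rw [Finset.sum_comm]
        refine Finset.sum_congr rfl fun i _ => Finset.sum_congr rfl fun j _ => ?_
        rw [Fmap_mul_rev, mul_assoc]
        exact congrArg (HMul.hMul (Fmap T β i.2)) (mul_assoc _ _ _).symm
    _ = ∑ i ∈ SR, Fmap T β i.2 *
          ((∑ j ∈ SD, Fmap T β (lcast k π A eG (T.φ β⁻¹ (β * β⁻¹ * β⁻¹) j.1)) * j.2) * i.1) := by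
        refine Finset.sum_congr rfl fun i _ => ?_
        rw [Finset.sum_mul, Finset.mul_sum]
    _ = T.ε (lcast k π A e1 w) • drinfeld k π A T Q β := by
        rw [hcol, drinfeld_eq, hR, map_sum, Finset.smul_sum]
        refine Finset.sum_congr rfl fun i _ => ?_
        rw [Umap_apply, ← Algebra.smul_def, mul_smul_comm]
end TC
end Star
section Drin
set_option linter.unusedSectionVars false
set_option maxHeartbeats 2000000

variable {k : Type u} [Field k] {π : Type u} [Group π]
  {A : π → Type u} [∀ α, Ring (A α)] [∀ α, Algebra k (A α)]

namespace TC
variable (T : TCoalgStruct k π A)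

theorem diamond (β : π) (w : A (β⁻¹ * β)) (S : Finset (A β⁻¹ × A β))
    (hS : T.Δ β⁻¹ β w = ∑ r ∈ S, r.1 ⊗ₜ[k] r.2)
    (eF : β * β⁻¹ * β⁻¹ = β⁻¹) (h₁ : β * β * β⁻¹ = β) (e1' : β⁻¹ * β = 1) :
    ∑ r ∈ S, lcast k π A eF (T.φ β β⁻¹ r.1) * T.s β (lcast k π A h₁ (T.φ β β r.2)) =
      algebraMap k (A β⁻¹) (T.ε (lcast k π A e1' w)) := by
  have pf : β * (β⁻¹ * β) * β⁻¹ = β * β⁻¹ * β⁻¹ * (β * β * β⁻¹) := by group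
  have har := antipode_right' T (β * β⁻¹ * β⁻¹) (β * β * β⁻¹) (by group) (by group)
    (by group) (cast (congrArg A pf) (T.φ β (β⁻¹ * β) w))
  rw [← T.φ_comul β β⁻¹ β w, hS] at har
  simp only [map_sum, TensorProduct.map_tmul, LinearMap.mul'_apply, LinearMap.coe_comp,
    Function.comp_apply, LinearMap.id_coe, id_eq, AlgHom.toLinearMap_apply] at har
  have h3 := congrArg (lcast k π A eF) har
  rw [lcast_algebraMap, map_sum,
    show (cast (congrArg A pf) (T.φ β (β⁻¹ * β) w) : A _) =
      lcast k π A pf (T.φ β (β⁻¹ * β) w) from rfl, lcast_lcast,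
    φ_counit' T β (β⁻¹ * β) e1' _ w] at h3
  rw [← h3]
  refine Finset.sum_congr rfl fun r _ => ?_
  rw [lcast_mul, s_lcast T h₁ (by rw [h₁]) (T.φ β β r.2), lcast_lcast]

variable (Q : QTStruct k π A T)

theorem drinfeld_comm (β : π) (x : A β) (h₁ : β * β * β⁻¹ = β) (h₃ : β⁻¹⁻¹ = β) :
    drinfeld k π A T Q β * x =
      lcast k π A h₃ (T.s β⁻¹ (T.s β (lcast k π A h₁ (T.φ β β x)))) *
        drinfeld k π A T Q β := by
  have eβ : β = β * β⁻¹ * β := by group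
  have e1 : β * β⁻¹ = 1 := mul_inv_cancel β
  have e1' : β⁻¹ * β = 1 := inv_mul_cancel β
  have eβ' : β * (β⁻¹ * β) = β := by group
  have eass : β * β⁻¹ * β = β * (β⁻¹ * β) := mul_assoc β β⁻¹ β
  have eF : β * β⁻¹ * β⁻¹ = β⁻¹ := by group
  obtain ⟨SR, hR⟩ := TensorProduct.exists_finset (Q.R β β⁻¹)
  obtain ⟨S2, hS2⟩ := TensorProduct.exists_finset (T.Δ (β * β⁻¹) β (lcast k π A eβ x))
  have hQ0 : ∀ p : A (β * β⁻¹) × A β, ∃ S : Finset (A β × A β⁻¹),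
      T.Δ β β⁻¹ p.1 = ∑ q ∈ S, q.1 ⊗ₜ[k] q.2 := fun p => TensorProduct.exists_finset _
  choose QD hQD using hQ0
  obtain ⟨S1, hS1⟩ := TensorProduct.exists_finset
    (T.Δ β (β⁻¹ * β) (lcast k π A eass (lcast k π A eβ x)))
  have hQ0' : ∀ p : A β × A (β⁻¹ * β), ∃ S : Finset (A β⁻¹ × A β),
      T.Δ β⁻¹ β p.2 = ∑ r ∈ S, r.1 ⊗ₜ[k] r.2 := fun p => TensorProduct.exists_finset _
  choose QD' hQD' using hQ0'
  set Ψ : A β →ₗ[k] A β :=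
    (lcast k π A h₃).comp ((T.s β⁻¹).comp ((T.s β).comp
      ((lcast k π A h₁).comp (T.φ β β).toLinearMap))) with hΨdef
  have hΨ : ∀ z : A β, Ψ z =
      lcast k π A h₃ (T.s β⁻¹ (T.s β (lcast k π A h₁ (T.φ β β z)))) := by
    intro z
    rw [hΨdef]
    simp only [LinearMap.coe_comp, Function.comp_apply, AlgHom.toLinearMap_apply]
  set E : A β := ∑ p ∈ S2, Ψ p.2 *
      (∑ i ∈ SR, ∑ q ∈ QD p, Fmap T β (i.2 * q.2) * (i.1 * q.1)) with hE
  -- (i) E = Ψ x * u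
  have hi : E = Ψ x * drinfeld k π A T Q β := by
    rw [hE]
    calc ∑ p ∈ S2, Ψ p.2 * (∑ i ∈ SR, ∑ q ∈ QD p, Fmap T β (i.2 * q.2) * (i.1 * q.1))
        = ∑ p ∈ S2, T.ε (lcast k π A e1 p.1) • (Ψ p.2 * drinfeld k π A T Q β) := by
          refine Finset.sum_congr rfl fun p _ => ?_
          rw [star_lemma T Q β p.1 (QD p) (hQD p) SR hR e1, mul_smul_comm]
      _ = (∑ p ∈ S2, T.ε (lcast k π A e1 p.1) • Ψ p.2) * drinfeld k π A T Q β := by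
          rw [Finset.sum_mul]
          exact Finset.sum_congr rfl fun p _ => (smul_mul_assoc _ _ _).symm
      _ = Ψ x * drinfeld k π A T Q β := by
          have h := cl_sum T (β * β⁻¹) β e1 eβ.symm (lcast k π A eβ x) S2 hS2
          rw [lcast_lcast, lcast_refl] at h
          congr 1
          calc ∑ p ∈ S2, T.ε (lcast k π A e1 p.1) • Ψ p.2
              = Ψ (∑ p ∈ S2, T.ε (lcast k π A e1 p.1) • p.2) := by
                rw [map_sum]
                exact Finset.sum_congr rfl fun p _ => (map_smul _ _ _).symm
            _ = Ψ x := by rw [h]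
  -- (ii) E = u * x
  set D : A β⁻¹ ⊗[k] A β →ₗ[k] A β :=
    (lcast k π A h₃).comp ((T.s β⁻¹).comp ((LinearMap.mul' k (A β⁻¹)).comp
      (TensorProduct.map ((lcast k π A eF).comp (T.φ β β⁻¹).toLinearMap)
        ((T.s β).comp ((lcast k π A h₁).comp (T.φ β β).toLinearMap))))) with hDdef
  have hD : ∀ (d : A β⁻¹) (z : A β), D (d ⊗ₜ[k] z) =
      lcast k π A h₃ (T.s β⁻¹
        (lcast k π A eF (T.φ β β⁻¹ d) * T.s β (lcast k π A h₁ (T.φ β β z)))) := by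
    intro d z
    rw [hDdef]
    simp only [LinearMap.coe_comp, Function.comp_apply, TensorProduct.map_tmul,
      LinearMap.mul'_apply, AlgHom.toLinearMap_apply]
  set g : A β ⊗[k] (A β⁻¹ ⊗[k] A β) →ₗ[k] A β :=
    ∑ i ∈ SR, (LinearMap.mul' k (A β)).comp
      ((TensorProduct.comm k (A β) (A β)).toLinearMap.comp
        (TensorProduct.map (LinearMap.mulLeft k (Fmap T β i.2 * i.1)) D)) with hgdef
  have hg : ∀ (c : A β) (d : A β⁻¹) (z : A β), g (c ⊗ₜ[k] (d ⊗ₜ[k] z)) =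
      ∑ i ∈ SR, D (d ⊗ₜ[k] z) * (Fmap T β i.2 * i.1 * c) := by
    intro c d z
    rw [hgdef]
    simp only [LinearMap.coe_sum, Finset.sum_apply, LinearMap.coe_comp,
      Function.comp_apply, TensorProduct.map_tmul, LinearEquiv.coe_coe,
      TensorProduct.comm_tmul, LinearMap.mul'_apply, LinearMap.mulLeft_apply]
  have hterm : ∀ (p : A (β * β⁻¹) × A β) (q : A β × A β⁻¹) (i : A β × A β⁻¹),
      Ψ p.2 * (Fmap T β (i.2 * q.2) * (i.1 * q.1)) =
        D (q.2 ⊗ₜ[k] p.2) * (Fmap T β i.2 * i.1 * q.1) := by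
    intro p q i
    rw [Fmap_mul_rev, hD, hΨ, Fmap_apply T β eF]
    rw [show (lcast k π A (inv_inv β)) (T.s β⁻¹ (lcast k π A eF (T.φ β β⁻¹ q.2))) =
      (lcast k π A h₃) (T.s β⁻¹ (lcast k π A eF (T.φ β β⁻¹ q.2))) from rfl]
    rw [s_antimul, lcast_mul]
    simp only [mul_assoc]
  have hii : E = drinfeld k π A T Q β * x := by
    have st1 : E = ∑ p ∈ S2, ∑ q ∈ QD p, g (q.1 ⊗ₜ[k] (q.2 ⊗ₜ[k] p.2)) := by
      rw [hE]
      refine Finset.sum_congr rfl fun p _ => ?_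
      rw [Finset.mul_sum]
      have hthis : ∀ i : A β × A β⁻¹,
          Ψ p.2 * (∑ q ∈ QD p, Fmap T β (i.2 * q.2) * (i.1 * q.1)) =
            ∑ q ∈ QD p, D (q.2 ⊗ₜ[k] p.2) * (Fmap T β i.2 * i.1 * q.1) := by
        intro i
        rw [Finset.mul_sum]
        exact Finset.sum_congr rfl fun q _ => hterm p q i
      simp only [hthis]
      rw [Finset.sum_comm]
      exact Finset.sum_congr rfl fun q _ => (hg q.1 q.2 p.2).symm
    have st2 := coassoc_sum T β β⁻¹ β g (lcast k π A eβ x) S2 hS2 QD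
      (fun p _ => hQD p) S1 hS1 QD' (fun p _ => hQD' p)
    have st3 : ∑ p' ∈ S1, ∑ r ∈ QD' p', g (p'.1 ⊗ₜ[k] (r.1 ⊗ₜ[k] r.2)) =
        drinfeld k π A T Q β * x := by
      have hDcol : ∀ p' : A β × A (β⁻¹ * β),
          (∑ r ∈ QD' p', D (r.1 ⊗ₜ[k] r.2)) =
            T.ε (lcast k π A e1' p'.2) • (1 : A β) := by
        intro p'
        calc ∑ r ∈ QD' p', D (r.1 ⊗ₜ[k] r.2)
            = lcast k π A h₃ (T.s β⁻¹ (∑ r ∈ QD' p',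
                lcast k π A eF (T.φ β β⁻¹ r.1) *
                  T.s β (lcast k π A h₁ (T.φ β β r.2)))) := by
              rw [map_sum, map_sum]
              exact Finset.sum_congr rfl fun r _ => hD r.1 r.2
          _ = T.ε (lcast k π A e1' p'.2) • (1 : A β) := by
              rw [diamond T β p'.2 (QD' p') (hQD' p') eF h₁ e1',
                Algebra.algebraMap_eq_smul_one, map_smul, map_smul, s_one, lcast_one]
      calc ∑ p' ∈ S1, ∑ r ∈ QD' p', g (p'.1 ⊗ₜ[k] (r.1 ⊗ₜ[k] r.2))
          = ∑ p' ∈ S1, ∑ i ∈ SR,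
              (T.ε (lcast k π A e1' p'.2) • (1 : A β)) * (Fmap T β i.2 * i.1 * p'.1) := by
            refine Finset.sum_congr rfl fun p' _ => ?_
            simp only [hg]
            rw [Finset.sum_comm]
            refine Finset.sum_congr rfl fun i _ => ?_
            rw [← Finset.sum_mul, hDcol p']
        _ = ∑ i ∈ SR, Fmap T β i.2 * i.1 *
              (∑ p' ∈ S1, T.ε (lcast k π A e1' p'.2) • p'.1) := by
            rw [Finset.sum_comm]
            refine Finset.sum_congr rfl fun i _ => ?_
            rw [Finset.mul_sum]
            refine Finset.sum_congr rfl fun p' _ => ?_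
            rw [smul_mul_assoc, one_mul, mul_smul_comm]
        _ = drinfeld k π A T Q β * x := by
            have h := cr_sum T β (β⁻¹ * β) e1' eβ' (lcast k π A eass (lcast k π A eβ x)) S1 hS1
            rw [lcast_lcast, lcast_lcast, lcast_refl] at h
            rw [h, drinfeld_eq, hR, map_sum, Finset.sum_mul]
            refine Finset.sum_congr rfl fun i _ => ?_
            rw [Umap_apply]
    rw [st1, st2, st3]
  rw [← hii, hi, hΨ]
end TC
end Drin
/-- `s_{α⁻¹}(u_{α⁻¹}) h = (s_α⁻¹ ∘ s_{α⁻¹}⁻¹ ∘ φ_α)(h) · s_{α⁻¹}(u_{α⁻¹})`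
for all `h ∈ H_α`, where `s⁻¹` denotes the inverse of the (bijective) antipode. -/
theorem antipode_drinfeld_commutation
    (A : π → Type u) [∀ α, Ring (A α)] [∀ α, Algebra k (A α)]
    (T : TCoalgStruct k π A) (Q : QTStruct k π A T)
    (sInv : ∀ α : π, A α⁻¹ →ₗ[k] A α)
    (hsInv₁ : ∀ (α : π) (x : A α), sInv α (T.s α x) = x)
    (hsInv₂ : ∀ (α : π) (x : A α⁻¹), T.s α (sInv α x) = x)
    (α : π) (h : A α) :
    (lcast k π A (inv_inv α) (T.s α⁻¹ (drinfeld k π A T Q α⁻¹))) * h =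
      (sInv α (sInv α⁻¹
          ((lcast k π A (by group : α = α⁻¹⁻¹))
            ((lcast k π A (by group : α * α * α⁻¹ = α)) (T.φ α α h))))) *
        (lcast k π A (inv_inv α) (T.s α⁻¹ (drinfeld k π A T Q α⁻¹))) := by
  have hsInv_lcast : ∀ (δ δ' : π) (hδ : δ = δ') (h₂ : δ⁻¹ = δ'⁻¹) (y : A δ⁻¹),
      sInv δ' (lcast k π A h₂ y) = lcast k π A hδ (sInv δ y) := by
    intro δ δ' hδ h₂ y; subst hδ; rfl
  have hφ_sInv : ∀ (g₀ δ : π) (y : A δ⁻¹) (h₂ : g₀ * δ⁻¹ * g₀⁻¹ = (g₀ * δ * g₀⁻¹)⁻¹),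
      T.φ g₀ δ (sInv δ y) =
        sInv (g₀ * δ * g₀⁻¹) (lcast k π A h₂ (T.φ g₀ δ⁻¹ y)) := by
    intro g₀ δ y h₂
    have hc := TC.s_φ T g₀ δ (sInv δ y) h₂.symm
    rw [hsInv₂ δ y] at hc
    have hc2 := congrArg (fun t => sInv (g₀ * δ * g₀⁻¹) (lcast k π A h₂ t)) hc
    rw [TC.lcast_lcast, TC.lcast_refl, hsInv₁] at hc2
    exact hc2
  have e1 : α * α * α⁻¹ = α := by group
  have e2 : α = α⁻¹⁻¹ := by group
  set V₂ : A α⁻¹⁻¹ := lcast k π A e2 (lcast k π A e1 (T.φ α α h)) with hV₂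
  set V : A α⁻¹ := sInv α⁻¹ V₂ with hV
  set W : A α := sInv α V with hW
  set x₀ : A α⁻¹ := sInv α⁻¹ (lcast k π A e2 W) with hx₀
  have h₁' : α⁻¹ * α⁻¹ * α⁻¹⁻¹ = α⁻¹ := by group
  have h₃' : α⁻¹⁻¹⁻¹ = α⁻¹ := by group
  have hdc := TC.drinfeld_comm T Q α⁻¹ x₀ h₁' h₃'
  have star2 := congrArg (fun t => lcast k π A (inv_inv α) (T.s α⁻¹ t)) hdc
  rw [TC.s_antimul, TC.s_antimul, TC.lcast_mul, TC.lcast_mul] at star2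
  have hbx : lcast k π A (inv_inv α) (T.s α⁻¹ x₀) = W := by
    rw [hx₀, hsInv₂, TC.lcast_lcast, TC.lcast_refl]
  have hax : lcast k π A (inv_inv α)
      (T.s α⁻¹ (lcast k π A h₃' (T.s α⁻¹⁻¹ (T.s α⁻¹
        (lcast k π A h₁' (T.φ α⁻¹ α⁻¹ x₀)))))) = h := by
    rw [hx₀, hφ_sInv α⁻¹ α⁻¹ (lcast k π A e2 W) (by group),
      TC.φ_lcast T α⁻¹ e2 (by rw [← e2]) W, hW, hφ_sInv α⁻¹ α V (by group),
      hV, hφ_sInv α⁻¹ α⁻¹ V₂ (by group), hV₂]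
    simp only [TC.lcast_lcast]
    rw [TC.φ_lcast T α⁻¹ (e1.trans e2) (by group) (T.φ α α h),
      TC.φ_inv_φ T α α (by group) h]
    simp only [TC.lcast_lcast]
    -- collapse the three sInv layers
    rw [← hsInv_lcast (α⁻¹ * α⁻¹ * α⁻¹⁻¹) α⁻¹ h₁' (by group), hsInv₂ α⁻¹]
    simp only [TC.lcast_lcast]
    rw [← hsInv_lcast (α⁻¹ * α * α⁻¹⁻¹) α⁻¹⁻¹ (by group) (by group), hsInv₂ α⁻¹⁻¹]
    simp only [TC.lcast_lcast]
    rw [← hsInv_lcast (α⁻¹ * α⁻¹ * α⁻¹⁻¹) α⁻¹ (by group) (by group), hsInv₂ α⁻¹]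
    simp only [TC.lcast_lcast]
    rw [TC.lcast_refl]
  rw [hbx, hax] at star2
  exact star2.symm
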